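/- arXiv:1802.03786 — 2 statements merged into one kernel-verified Lean document; each statement's English description precedes it below -/
import Mathlib

section
/- Let R be a ring with identity and let A_1, …, A_n be proper right ideals of R with n ≥ 2 such that A_iA_j = A_jA_i for every i, j = 1, …, n and the family {A_1, …, A_n} is coindependent. Then each A_i is a two-sided ideal of R. -/
open MulOpposite

universe u

/-- The product `A·B` of two right ideals of `R` (right ideals are `Rᵐᵒᵖ`-submodules of `R`):
the set of all finite sums of products `a * b` with `a ∈ A`, `b ∈ B`. -/
def rmul {R : Type u} [Ring R] (A B : Submodule Rᵐᵒᵖ R) : Submodule Rᵐᵒᵖ R :=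
  Submodule.span Rᵐᵒᵖ {x : R | ∃ a ∈ A, ∃ b ∈ B, x = a * b}

/-- The product `A₁⋯Aₙ` of a (possibly empty) list of right ideals. -/
def rprod {R : Type u} [Ring R] : List (Submodule Rᵐᵒᵖ R) → Submodule Rᵐᵒᵖ R
  | [] => ⊤
  | [A] => A
  | A :: l => rmul A (rprod l)

/-- A finite family of right ideals is coindependent if `Aᵢ + ⋂_{j ≠ i} Aⱼ = R` for every `i`. -/
def Coindep {R : Type u} [Ring R] {n : ℕ} (A : Fin n → Submodule Rᵐᵒᵖ R) : Prop :=
  ∀ i, A i ⊔ (⨅ j, ⨅ (_ : j ≠ i), A j) = ⊤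

/-- A module is uniserial if its submodules are linearly ordered by inclusion. -/
def IsUniserialMod (S : Type*) [Ring S] (M : Type*) [AddCommGroup M] [Module S M] : Prop :=
  ∀ N P : Submodule S M, N ≤ P ∨ P ≤ N

/-- A right ideal is a two-sided ideal if it is also closed under left multiplication. -/
def IsTwoSidedRid {R : Type u} [Ring R] (A : Submodule Rᵐᵒᵖ R) : Prop :=
  ∀ (r : R), ∀ x ∈ A, r * x ∈ A

/-- A serial factorization of a right ideal `A`: a factorization `A = A₁⋯Aₙ` into proper
right ideals that pairwise commute, form a coindependent family, and are such that every
quotient `R/Aᵢ` is a uniserial right `R`-module. -/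
def IsSerialFact {R : Type u} [Ring R] {n : ℕ} (A : Submodule Rᵐᵒᵖ R)
    (F : Fin n → Submodule Rᵐᵒᵖ R) : Prop :=
  (∀ i, F i ≠ ⊤) ∧ (∀ i j, rmul (F i) (F j) = rmul (F j) (F i)) ∧ Coindep F ∧
    (∀ i, IsUniserialMod Rᵐᵒᵖ (R ⧸ F i)) ∧ A = rprod (List.ofFn F)

/-- A right ideal has a serial factorization if it admits one of some length. -/
def HasSerialFact {R : Type u} [Ring R] (A : Submodule Rᵐᵒᵖ R) : Prop :=
  ∃ (n : ℕ) (F : Fin n → Submodule Rᵐᵒᵖ R), IsSerialFact A F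

/-- A right chain ring: its right ideals are linearly ordered by inclusion. -/
def IsRightChainRing (R : Type u) [Ring R] : Prop :=
  ∀ A B : Submodule Rᵐᵒᵖ R, A ≤ B ∨ B ≤ A

/-- A ring is right duo if every right ideal is a two-sided ideal. -/
def IsRightDuo (R : Type u) [Ring R] : Prop :=
  ∀ A : Submodule Rᵐᵒᵖ R, IsTwoSidedRid A

/-- The principal right ideal `rR`. -/
def rspan {R : Type u} [Ring R] (r : R) : Submodule Rᵐᵒᵖ R :=
  Submodule.span Rᵐᵒᵖ ({r} : Set R)

lemma rmul_le_left {R : Type u} [Ring R] (A B : Submodule Rᵐᵒᵖ R) : rmul A B ≤ A := by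
  apply Submodule.span_le.mpr
  rintro x ⟨a, ha, b, hb, rfl⟩
  exact A.smul_mem (MulOpposite.op b) ha

/-- Lemma 1(2): if `n ≥ 2` proper right ideals pairwise commute and form a coindependent
family, then each of them is a two-sided ideal. -/
theorem statement1 {R : Type u} [Ring R] [Nontrivial R] {n : ℕ} (hn : 2 ≤ n)
    (A : Fin n → Submodule Rᵐᵒᵖ R)
    (hproper : ∀ i, A i ≠ ⊤)
    (hcomm : ∀ i j, rmul (A i) (A j) = rmul (A j) (A i))
    (hcoind : Coindep A) :
    ∀ i, IsTwoSidedRid (A i) := by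
  intro i r x hx
  haveI : Nontrivial (Fin n) := Fin.nontrivial_iff_two_le.mpr hn
  obtain ⟨j, hj⟩ := exists_ne i
  have h1 : (1 : R) ∈ A i ⊔ (⨅ k, ⨅ (_ : k ≠ i), A k) := by
    rw [hcoind i]; trivial
  obtain ⟨a, ha, b, hb, hab⟩ := Submodule.mem_sup.mp h1
  simp only [Submodule.mem_iInf] at hb
  have hbj : b ∈ A j := hb j hj
  have key : r * x = a * (r * x) + (b * r) * x := by
    rw [mul_assoc, ← add_mul, hab, one_mul]
  rw [key]
  refine (A i).add_mem ((A i).smul_mem (op (r * x)) ha) ?_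
  have h2 : (b * r) * x ∈ rmul (A j) (A i) :=
    Submodule.subset_span ⟨b * r, (A j).smul_mem (op r) hbj, x, hx, rfl⟩
  rw [hcomm j i] at h2
  exact rmul_le_left (A i) (A j) h2
end

section
/- Let R be a ring and A, B two right ideals of R with serial factorizations A = A_1⋯A_n and B = B_1⋯B_m respectively. If A ⊆ B, then there exists an injective mapping σ : {1, …, m} → {1, …, n} such that A_{σ(j)} ⊆ B_j for every j = 1, …, m. -/
/-
Products of commuting coindependent right ideals contain their intersections, so
`⋂ Aᵢ ⊆ A ⊆ B ⊆ Bⱼ`. If `Aᵢ + Bⱼ = R`, then `Aᵢ` can be removed from an inclusion `Aᵢ ∩ Y ⊆ Bⱼ`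
whenever `Aᵢ Y ⊆ Y`: writing `1 = a + b` gives `y = a y + b y` with `a y ∈ Aᵢ ∩ Y`. Removing every
`Aᵢ` would give `R ⊆ Bⱼ`, so some `Aᵢ` is not comaximal with `Bⱼ`; as the `Aᵢ` are pairwise
comaximal and `R/Bⱼ` is uniserial, it is the only one, and removing the others leaves `Aᵢ ⊆ Bⱼ`.
Finally `A_σ(j) ⊆ Bⱼ ∩ Bⱼ'` with `Bⱼ + Bⱼ' = R` is impossible when `R/A_σ(j)` is uniserial, so
`σ` is injective.
-/

open MulOpposite

universe u

open scoped Pointwise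

section RightIdeals

variable {R : Type u} [Ring R] {A B C : Submodule Rᵐᵒᵖ R} {a b : R}

lemma mul_mem_of_mem_rid (ha : a ∈ A) (r : R) : a * r ∈ A := by
  simpa using A.smul_mem (op r) ha

lemma mem_rmul (ha : a ∈ A) (hb : b ∈ B) : a * b ∈ rmul A B :=
  Submodule.subset_span ⟨a, ha, b, hb, rfl⟩

lemma rmul_le (h : ∀ a ∈ A, ∀ b ∈ B, a * b ∈ C) : rmul A B ≤ C :=
  Submodule.span_le.2 fun _ ⟨a, ha, b, hb, hx⟩ => hx ▸ h a ha b hb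

lemma rmul_le_left_s9 : rmul A B ≤ A :=
  rmul_le fun _ ha b _ => mul_mem_of_mem_rid ha b

lemma rmul_mono_right (h : B ≤ C) : rmul A B ≤ rmul A C :=
  rmul_le fun _ ha _ hb => mem_rmul ha (h hb)

lemma rmul_top : rmul A ⊤ = A :=
  le_antisymm rmul_le_left_s9 fun a ha => by simpa using mem_rmul ha (Submodule.mem_top (x := (1 : R)))

/-- `rmul` is the multiplication of additive submonoids, whence its associativity. -/
lemma toAddSubmonoid_rmul (A B : Submodule Rᵐᵒᵖ R) :
    (rmul A B).toAddSubmonoid = A.toAddSubmonoid * B.toAddSubmonoid := by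
  refine le_antisymm (fun x hx => ?_) (AddSubmonoid.mul_le.2 fun _ ha _ hb => mem_rmul ha hb)
  induction hx using Submodule.span_induction with
  | mem x hx =>
    obtain ⟨a, ha, b, hb, rfl⟩ := hx
    exact AddSubmonoid.mul_mem_mul ha hb
  | zero => exact zero_mem _
  | add x y _ _ hx hy => exact add_mem hx hy
  | smul s x _ hx =>
    refine AddSubmonoid.mul_induction_on (C := fun x => s • x ∈ _) hx
      (fun a ha b hb => ?_) fun x y hx hy => by simpa only [smul_add] using add_mem hx hy
    rw [← op_unop s, op_smul_eq_mul, mul_assoc]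
    exact AddSubmonoid.mul_mem_mul ha (mul_mem_of_mem_rid hb _)

lemma rmul_assoc (A B C : Submodule Rᵐᵒᵖ R) : rmul (rmul A B) C = rmul A (rmul B C) :=
  Submodule.toAddSubmonoid_injective <| by simp only [toAddSubmonoid_rmul, mul_assoc]

lemma inf_le_rmul (hAB : A ⊔ B = ⊤) (hBA : rmul B A ≤ rmul A B) : A ⊓ B ≤ rmul A B := by
  rintro z ⟨hzA, hzB⟩
  obtain ⟨x, hx, y, hy, hxy⟩ := Submodule.mem_sup.1 (hAB ▸ Submodule.mem_top : (1 : R) ∈ A ⊔ B)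
  rw [← one_mul z, ← hxy, add_mul]
  exact add_mem (mem_rmul hx hzB) (hBA (mem_rmul hy hzA))

lemma le_of_inf_le_of_sup_eq_top {X Y G : Submodule Rᵐᵒᵖ R} (hXG : X ⊔ G = ⊤)
    (hXY : rmul X Y ≤ Y) (h : X ⊓ Y ≤ G) : Y ≤ G := by
  intro y hy
  obtain ⟨x, hx, g, hg, hxg⟩ := Submodule.mem_sup.1 (hXG ▸ Submodule.mem_top : (1 : R) ∈ X ⊔ G)
  rw [← one_mul y, ← hxg, add_mul]
  exact add_mem (h ⟨mul_mem_of_mem_rid hx y, hXY (mem_rmul hx hy)⟩) (mul_mem_of_mem_rid hg y)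

lemma sup_eq_top_or_sup_eq_top_of_uniserial {X Y G : Submodule Rᵐᵒᵖ R}
    (hG : IsUniserialMod Rᵐᵒᵖ (R ⧸ G)) (hXY : X ⊔ Y = ⊤) : X ⊔ G = ⊤ ∨ Y ⊔ G = ⊤ := by
  have hcomap (Z : Submodule Rᵐᵒᵖ R) : (Z.map G.mkQ).comap G.mkQ = Z ⊔ G := by
    rw [Submodule.comap_map_mkQ, sup_comm]
  rcases hG (X.map G.mkQ) (Y.map G.mkQ) with h | h
  · replace h := Submodule.comap_mono (f := G.mkQ) h
    rw [hcomap, hcomap] at h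
    exact .inr (top_unique (hXY.ge.trans (sup_le (le_sup_left.trans h) le_sup_left)))
  · replace h := Submodule.comap_mono (f := G.mkQ) h
    rw [hcomap, hcomap] at h
    exact .inl (top_unique (hXY.ge.trans (sup_le le_sup_left (le_sup_left.trans h))))


lemma rprod_cons (A : Submodule Rᵐᵒᵖ R) (l : List (Submodule Rᵐᵒᵖ R)) :
    rprod (A :: l) = rmul A (rprod l) := by
  cases l with
  | nil => exact rmul_top.symm
  | cons => rfl

lemma rprod_le_of_mem :
    ∀ {l : List (Submodule Rᵐᵒᵖ R)}, l.Pairwise (fun X Y => rmul X Y = rmul Y X) →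
      ∀ {X}, X ∈ l → rprod l ≤ X
  | A :: l, hl, X, hX => by
    rw [List.pairwise_cons] at hl
    rw [rprod_cons]
    rcases List.mem_cons.1 hX with rfl | hX
    · exact rmul_le_left_s9
    · exact (rmul_mono_right (rprod_le_of_mem hl.2 hX)).trans ((hl.1 X hX).le.trans rmul_le_left_s9)

lemma rmul_rprod_comm :
    ∀ {l : List (Submodule Rᵐᵒᵖ R)}, l ≠ [] → (∀ X ∈ l, rmul A X = rmul X A) →
      rmul A (rprod l) = rmul (rprod l) A
  | [X], _, h => h X (List.mem_singleton_self X)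
  | X :: Y :: l, _, h => by
    rw [rprod_cons X, ← rmul_assoc, h X List.mem_cons_self, rmul_assoc,
      rmul_rprod_comm (List.cons_ne_nil Y l) fun Z hZ => h Z (List.mem_cons_of_mem X hZ),
      ← rmul_assoc]

lemma Coindep.comp {n k : ℕ} {F : Fin n → Submodule Rᵐᵒᵖ R} (hF : Coindep F) {e : Fin k → Fin n}
    (he : e.Injective) : Coindep (F ∘ e) := by
  intro i
  refine top_unique <| (hF (e i)).ge.trans <| sup_le_sup_left ?_ _
  exact le_iInf₂ fun j hj => (iInf_le _ (e j)).trans (iInf_le _ (he.ne hj))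

lemma Coindep.pairwise_sup_eq_top {n : ℕ} {F : Fin n → Submodule Rᵐᵒᵖ R} (hF : Coindep F) :
    Pairwise fun i j => F i ⊔ F j = ⊤ := fun i j hij =>
  top_unique <| (hF i).ge.trans <| sup_le_sup_left ((iInf_le _ j).trans (iInf_le _ hij.symm)) _

lemma iInf_le_rprod_ofFn :
    ∀ {n : ℕ} {F : Fin n → Submodule Rᵐᵒᵖ R}, (∀ i j, rmul (F i) (F j) = rmul (F j) (F i)) →
      Coindep F → ⨅ i, F i ≤ rprod (List.ofFn F)
  | 0, _, _, _ => le_top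
  | 1, F, _, _ => iInf_le F 0
  | n + 2, F, hcomm, hF => by
    set P := rprod (List.ofFn fun i : Fin (n + 1) => F i.succ)
    have hP : ⨅ i : Fin (n + 1), F i.succ ≤ P :=
      iInf_le_rprod_ofFn (fun i j => hcomm _ _) (hF.comp (Fin.succ_injective _))
    have hsup : F 0 ⊔ P = ⊤ :=
      top_unique <| (hF 0).ge.trans <| sup_le_sup_left
        ((le_iInf fun i => iInf₂_le i.succ (Fin.succ_ne_zero i)).trans hP) _
    have hcomm' : rmul (F 0) P = rmul P (F 0) := by
      refine rmul_rprod_comm (by simp) fun X hX => ?_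
      obtain ⟨i, rfl⟩ := List.mem_ofFn.1 hX
      exact hcomm _ _
    calc ⨅ i, F i ≤ F 0 ⊓ ⨅ i : Fin (n + 1), F i.succ :=
          le_inf (iInf_le _ 0) (le_iInf fun i => iInf_le _ i.succ)
      _ ≤ F 0 ⊓ P := inf_le_inf_left _ hP
      _ ≤ rprod (List.ofFn F) := by
          rw [List.ofFn_succ, rprod_cons]
          exact inf_le_rmul hsup hcomm'.ge

lemma iInf_notMem_le_of_sup_eq_top {ι : Type*} {F : ι → Submodule Rᵐᵒᵖ R}
    (hcomm : ∀ i j, rmul (F i) (F j) = rmul (F j) (F i)) {G : Submodule Rᵐᵒᵖ R}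
    (hFG : ⨅ i, F i ≤ G) (S : Finset ι) (hS : ∀ i ∈ S, F i ⊔ G = ⊤) :
    ⨅ (i) (_ : i ∉ S), F i ≤ G := by
  classical
  induction S using Finset.induction_on with
  | empty => simpa using hFG
  | insert a S ha ih =>
    refine le_of_inf_le_of_sup_eq_top (hS a (Finset.mem_insert_self a S)) ?_ ?_
    · exact le_iInf₂ fun i _ =>
        (rmul_mono_right (iInf₂_le i ‹_›)).trans ((hcomm a i).le.trans rmul_le_left_s9)
    · refine le_trans (le_iInf₂ fun i hi => ?_) (ih fun i hi => hS i (Finset.mem_insert_of_mem hi))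
      by_cases hia : i = a
      · exact hia ▸ inf_le_left
      · exact inf_le_right.trans (iInf₂_le i (by simp [hia, hi]))

lemma exists_le_of_iInf_le {ι : Type*} [Fintype ι] {F : ι → Submodule Rᵐᵒᵖ R}
    (hcomm : ∀ i j, rmul (F i) (F j) = rmul (F j) (F i))
    (hcomax : Pairwise fun i j => F i ⊔ F j = ⊤) {G : Submodule Rᵐᵒᵖ R} (hG : G ≠ ⊤)
    (hGuni : IsUniserialMod Rᵐᵒᵖ (R ⧸ G)) (hFG : ⨅ i, F i ≤ G) : ∃ i, F i ≤ G := by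
  classical
  obtain ⟨i, hi⟩ : ∃ i, F i ⊔ G ≠ ⊤ := by
    by_contra! h
    have := iInf_notMem_le_of_sup_eq_top hcomm hFG Finset.univ fun i _ => h i
    exact hG (top_unique (by simpa using this))
  have hothers (k : ι) (hk : k ∈ ({i}ᶜ : Finset ι)) : F k ⊔ G = ⊤ :=
    (sup_eq_top_or_sup_eq_top_of_uniserial hGuni (hcomax (by simpa using hk))).resolve_right hi
  exact ⟨i, by simpa using iInf_notMem_le_of_sup_eq_top hcomm hFG _ hothers⟩

end RightIdeals

theorem statement9_general {R : Type u} [Ring R] {n m : ℕ}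
    (A B : Submodule Rᵐᵒᵖ R)
    (F : Fin n → Submodule Rᵐᵒᵖ R) (G : Fin m → Submodule Rᵐᵒᵖ R)
    (hF : IsSerialFact A F) (hG : IsSerialFact B G) (hAB : A ≤ B) :
    ∃ σ : Fin m → Fin n, Function.Injective σ ∧ ∀ j, F (σ j) ≤ G j := by
  obtain ⟨-, hFcomm, hFcoind, hFuni, rfl⟩ := hF
  obtain ⟨hGprop, hGcomm, hGcoind, hGuni, rfl⟩ := hG
  have hFG (j : Fin m) : ⨅ i, F i ≤ G j :=
    (iInf_le_rprod_ofFn hFcomm hFcoind).trans <| hAB.trans <|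
      rprod_le_of_mem (List.pairwise_ofFn.2 fun i k _ => hGcomm i k) (List.mem_ofFn.2 ⟨j, rfl⟩)
  choose σ hσ using fun j =>
    exists_le_of_iInf_le hFcomm hFcoind.pairwise_sup_eq_top (hGprop j) (hGuni j) (hFG j)
  refine ⟨σ, fun j j' hjj' => ?_, hσ⟩
  by_contra hne
  rcases sup_eq_top_or_sup_eq_top_of_uniserial (hFuni (σ j)) (hGcoind.pairwise_sup_eq_top hne)
    with h | h
  · exact hGprop j (by rwa [sup_eq_left.2 (hσ j)] at h)
  · exact hGprop j' (by rwa [sup_eq_left.2 (hjj' ▸ hσ j')] at h)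

/-- Corollary: if `A = A₁⋯Aₙ` and `B = B₁⋯Bₘ` are serial factorizations and `A ⊆ B`, then
there is an injective map `σ : {1, …, m} → {1, …, n}` with `A_{σ(j)} ⊆ Bⱼ` for all `j`. -/
theorem statement9 {R : Type u} [Ring R] [Nontrivial R] {n m : ℕ}
    (A B : Submodule Rᵐᵒᵖ R)
    (F : Fin n → Submodule Rᵐᵒᵖ R) (G : Fin m → Submodule Rᵐᵒᵖ R)
    (hF : IsSerialFact A F) (hG : IsSerialFact B G) (hAB : A ≤ B) :
    ∃ σ : Fin m → Fin n, Function.Injective σ ∧ ∀ j, F (σ j) ≤ G j :=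
  statement9_general A B F G hF hG hAB
end
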